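/- Let p be an odd prime with 2 a primitive root modulo p², let 2 ≤ w ≤ p−1, and let 𝓘 ⊆ {0,…,p−1} be nonempty with |𝓘| ≤ (p−1)/2. Define the p²-periodic binary sequence (h_u) by h_u = 1 if u mod p² ∈ ∪_{l∈𝓘} D_l and h_u = 0 otherwise, where D_l = {u : 0 ≤ u < p², gcd(u,p)=1, q_{p,w}(u)=l}. If |𝓘| is odd, the linear complexity of (h_u) over F₂ equals p² − 1; if |𝓘| is even, it equals p² − p. -/
import Mathlib

open Polynomial Finset

/-- The polynomial quotient `q_{p,w}(u)`. -/
def polyQuot (p w u : ℕ) : ℕ := ((((u : ℤ) ^ w - (u : ℤ) ^ (w * p)) / (p : ℤ)) % (p : ℤ)).toNat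


lemma polyQuot_lt (p w u : ℕ) (hp : 0 < p) : polyQuot p w u < p := by
  unfold polyQuot
  have hp' : (0:ℤ) < p := by exact_mod_cast hp
  have := Int.emod_lt_of_pos ((((u : ℤ) ^ w - (u : ℤ) ^ (w * p)) / (p : ℤ))) hp'
  omega

lemma polyQuot_cast (p w u : ℕ) (hp : 0 < p) :
    ((polyQuot p w u : ℕ) : ZMod p) = ((((u : ℤ) ^ w - (u : ℤ) ^ (w * p)) / (p : ℤ) : ℤ) : ZMod p) := by
  unfold polyQuot
  set x : ℤ := (((u : ℤ) ^ w - (u : ℤ) ^ (w * p)) / (p : ℤ))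
  have hp' : (p:ℤ) ≠ 0 := by exact_mod_cast hp.ne'
  have h1 : (((x % (p:ℤ)).toNat : ℕ) : ℤ) = x % p := Int.toNat_of_nonneg (Int.emod_nonneg x hp')
  have h2 : (((x % (p:ℤ)).toNat : ℕ) : ZMod p) = ((x % (p:ℤ) : ℤ) : ZMod p) := by
    exact_mod_cast congrArg (fun z : ℤ => (z : ZMod p)) h1
  rw [h2, ZMod.intCast_mod]

lemma binom_aux (a x : ℤ) (n : ℕ) :
    ∃ c, (a + x) ^ (n + 1) = a ^ (n + 1) + (n + 1) * a ^ n * x + x ^ 2 * c := by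
  induction n with
  | zero => exact ⟨0, by ring⟩
  | succ n ih =>
    obtain ⟨c, hc⟩ := ih
    refine ⟨(n + 1) * a ^ n + c * (a + x), ?_⟩
    rw [pow_succ (a + x), hc]
    push_cast
    ring

lemma polyQuot_step (p w j k : ℕ) (hp : p.Prime) (hw : 0 < w) :
    ((polyQuot p w (k * p + j) : ℕ) : ZMod p) =
      (polyQuot p w j : ZMod p) + (k : ZMod p) * (w : ZMod p) * (j : ZMod p) ^ (w - 1) := by
  haveI : Fact p.Prime := ⟨hp⟩
  have hppos := hp.pos
  have hp' : (p:ℤ) ≠ 0 := by exact_mod_cast hppos.ne'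
  set a : ℤ := (j : ℤ) with ha
  set u : ℤ := a + (k : ℤ) * p with hu
  -- p divides N t for all t
  have hNdvd : ∀ t : ℤ, (p:ℤ) ∣ t ^ w - t ^ (w * p) := by
    intro t
    have : ((t ^ w - t ^ (w * p) : ℤ) : ZMod p) = 0 := by
      push_cast
      rw [mul_comm w p, pow_mul', ZMod.pow_card, sub_self]
    exact (ZMod.intCast_zmod_eq_zero_iff_dvd _ _).mp this
  obtain ⟨qa, hqa⟩ := hNdvd a
  obtain ⟨c, hc⟩ : ∃ c, u ^ w = a ^ w + (w:ℤ) * a ^ (w - 1) * ((k:ℤ) * p) + ((k:ℤ) * p) ^ 2 * c := by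
    obtain ⟨c, hc⟩ := binom_aux a ((k:ℤ) * p) (w - 1)
    rw [Nat.sub_add_cancel hw] at hc
    have hw' : ((w - 1 : ℕ) : ℤ) + 1 = (w : ℤ) := by
      rw [Nat.cast_sub hw]; ring
    rw [hw'] at hc
    exact ⟨c, by rw [hu, hc]⟩
  have h3 : ((p:ℤ)) ^ 2 ∣ u ^ (w * p) - a ^ (w * p) := by
    have h1 : (p:ℤ) ∣ u ^ w - a ^ w :=
      dvd_trans ⟨(k:ℤ), by rw [hu]; ring⟩ (sub_dvd_pow_sub_pow u a w)
    have := dvd_sub_pow_of_dvd_sub h1 1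
    simpa [pow_one, ← pow_mul] using this
  obtain ⟨m2, hm2⟩ := h3
  -- N u = p * (qa + w a^(w-1) k + p * m) for some m
  have key : u ^ w - u ^ (w * p) = (p:ℤ) * (qa + (w:ℤ) * a ^ (w - 1) * k + (p:ℤ) * ((k:ℤ)^2 * c - m2)) := by
    have e1 : u ^ (w * p) = a ^ (w * p) + (p:ℤ)^2 * m2 := by rw [← hm2]; ring
    rw [hc, e1]
    linear_combination hqa
  have hQu : (u ^ w - u ^ (w * p)) / (p:ℤ) = qa + (w:ℤ) * a ^ (w - 1) * k + (p:ℤ) * ((k:ℤ)^2 * c - m2) := by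
    rw [key, Int.mul_ediv_cancel_left _ hp']
  have hQa : (a ^ w - a ^ (w * p)) / (p:ℤ) = qa := by
    rw [hqa, Int.mul_ediv_cancel_left _ hp']
  have hcastu : ((k * p + j : ℕ) : ℤ) = u := by push_cast [hu, ha]; ring
  rw [polyQuot_cast p w (k*p+j) hppos, polyQuot_cast p w j hppos, hcastu, ← ha, hQu, hQa]
  push_cast [ha]
  rw [ZMod.natCast_self]
  ring

section
variable (p w j : ℕ)

lemma polyQuot_injOn (hp : p.Prime) (hw2 : 2 ≤ w) (hwp : w ≤ p - 1) (hj : Nat.gcd j p = 1) (k1 k2 : ℕ) (h1 : k1 < p) (h2 : k2 < p)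
    (heq : polyQuot p w (k1 * p + j) = polyQuot p w (k2 * p + j)) : k1 = k2 := by
  haveI : Fact p.Prime := ⟨hp⟩
  have hppos := hp.pos
  have hw : 0 < w := by omega
  have hwne : (w : ZMod p) ≠ 0 := by
    rw [Ne, ZMod.natCast_eq_zero_iff]
    intro h
    have := Nat.le_of_dvd hw h
    omega
  have hjne : (j : ZMod p) ≠ 0 := by
    rw [Ne, ZMod.natCast_eq_zero_iff]
    intro h
    have : p ∣ Nat.gcd j p := Nat.dvd_gcd h dvd_rfl
    rw [hj] at this
    have := Nat.le_of_dvd Nat.one_pos this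
    omega
  have hcne : (w : ZMod p) * (j : ZMod p) ^ (w - 1) ≠ 0 :=
    mul_ne_zero hwne (pow_ne_zero _ hjne)
  have hc : (k1 : ZMod p) = (k2 : ZMod p) := by
    have e1 := polyQuot_step p w j k1 hp hw
    have e2 := polyQuot_step p w j k2 hp hw
    rw [heq, e2] at e1
    have := add_left_cancel e1.symm
    rw [mul_assoc, mul_assoc] at this
    exact mul_right_cancel₀ hcne this
  have := congrArg ZMod.val hc
  rwa [ZMod.val_cast_of_lt h1, ZMod.val_cast_of_lt h2] at this

lemma polyQuot_image (hp : p.Prime) (hw2 : 2 ≤ w) (hwp : w ≤ p - 1) (hj : Nat.gcd j p = 1) :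
    Finset.image (fun k => polyQuot p w (k * p + j)) (Finset.range p) = Finset.range p := by
  apply Finset.eq_of_subset_of_card_le
  · intro x hx
    simp only [Finset.mem_image, Finset.mem_range] at hx ⊢
    obtain ⟨k, _, rfl⟩ := hx
    exact polyQuot_lt p w _ hp.pos
  · rw [Finset.card_image_of_injOn, Finset.card_range]
    intro k1 hk1 k2 hk2 h
    exact polyQuot_injOn p w j hp hw2 hwp hj k1 k2
      (Finset.mem_range.mp hk1) (Finset.mem_range.mp hk2) h

lemma polyQuot_count (hp : p.Prime) (hw2 : 2 ≤ w) (hwp : w ≤ p - 1) (hj : Nat.gcd j p = 1) (I : Finset ℕ) (hI : I ⊆ Finset.range p) :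
    ((Finset.range p).filter fun k => polyQuot p w (k * p + j) ∈ I).card = I.card := by
  apply Finset.card_bij (fun k _ => polyQuot p w (k * p + j))
  · intro k hk
    exact (Finset.mem_filter.mp hk).2
  · intro k1 hk1 k2 hk2 h
    exact polyQuot_injOn p w j hp hw2 hwp hj k1 k2
      (Finset.mem_range.mp (Finset.mem_filter.mp hk1).1)
      (Finset.mem_range.mp (Finset.mem_filter.mp hk2).1) h
  · intro l hl
    have : l ∈ Finset.range p := hI hl
    rw [← polyQuot_image p w j hp hw2 hwp hj, Finset.mem_image] at this
    obtain ⟨k, hk, hfk⟩ := this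
    exact ⟨k, Finset.mem_filter.mpr ⟨hk, hfk ▸ hl⟩, hfk⟩

lemma polyQuot_exists (hp : p.Prime) (hw2 : 2 ≤ w) (hwp : w ≤ p - 1) (hj : Nat.gcd j p = 1) (l : ℕ) (hl : l < p) :
    ∃ k < p, polyQuot p w (k * p + j) = l := by
  have : l ∈ Finset.range p := Finset.mem_range.mpr hl
  rw [← polyQuot_image p w j hp hw2 hwp hj, Finset.mem_image] at this
  obtain ⟨k, hk, hfk⟩ := this
  exact ⟨k, Finset.mem_range.mp hk, hfk⟩

end

lemma sum_range_mul_decomp {M : Type*} [AddCommMonoid M] (f : ℕ → M) (m n : ℕ) (hn : 0 < n) :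
    ∑ u ∈ range (m * n), f u = ∑ k ∈ range m, ∑ j ∈ range n, f (k * n + j) := by
  rw [← Finset.sum_product']
  apply Finset.sum_nbij' (fun u => (u / n, u % n)) (fun x => x.1 * n + x.2)
  · intro u hu
    simp only [mem_range] at hu
    simp only [Finset.mem_product, mem_range]
    exact ⟨Nat.div_lt_iff_lt_mul hn |>.mpr hu, Nat.mod_lt _ hn⟩
  · intro x hx
    simp only [Finset.mem_product, mem_range] at hx
    simp only [mem_range]
    calc x.1 * n + x.2 < x.1 * n + n := by omega
    _ = (x.1 + 1) * n := by ring
    _ ≤ m * n := Nat.mul_le_mul_right n (by omega)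
  · intro u hu
    show u / n * n + u % n = u
    rw [mul_comm]
    exact Nat.div_add_mod u n
  · rintro ⟨k, j⟩ hx
    simp only [Finset.mem_product, mem_range] at hx
    have hj := hx.2
    show (((k * n + j) / n, (k * n + j) % n) : ℕ × ℕ) = (k, j)
    rw [show k * n + j = j + k * n by ring, Nat.add_mul_div_right _ _ hn,
      Nat.add_mul_mod_self_right, Nat.div_eq_of_lt hj, Nat.mod_eq_of_lt hj]
    simp
  · intro u hu
    rw [show u / n * n + u % n = u by rw [mul_comm]; exact Nat.div_add_mod u n]

lemma gcd_step (p k j : ℕ) : Nat.gcd (k * p + j) p = Nat.gcd j p := by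
  rw [Nat.gcd_comm, show k * p + j = j + k * p by ring, Nat.gcd_add_mul_right_right,
    Nat.gcd_comm]

lemma zmod2_monic {f : Polynomial (ZMod 2)} (hf : f ≠ 0) : f.Monic := by
  have h := Polynomial.leadingCoeff_ne_zero.mpr hf
  unfold Polynomial.Monic
  revert h; generalize f.leadingCoeff = x; revert x; decide

lemma cyclotomic_zmod2_irreducible (n : ℕ) (hn : 2 ≤ n) (hodd : Odd n)
    (hord : orderOf (2 : ZMod n) = Nat.totient n) :
    Irreducible (cyclotomic n (ZMod 2)) := by
  set Φ : Polynomial (ZMod 2) := cyclotomic n (ZMod 2) with hΦ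
  have hmono : Φ.Monic := cyclotomic.monic n _
  have hdeg : Φ.natDegree = Nat.totient n := natDegree_cyclotomic n _
  have htot : 0 < Nat.totient n := Nat.totient_pos.mpr (by omega)
  have hnu : ¬ IsUnit Φ := by
    intro h
    have := Polynomial.natDegree_eq_zero_of_isUnit h
    omega
  obtain ⟨f, hfirr, hfdvd⟩ := WfDvdMonoid.exists_irreducible_factor hnu hmono.ne_zero
  have hf0 : f ≠ 0 := hfirr.ne_zero
  have hfm : f.Monic := zmod2_monic hf0
  haveI : Fact (Irreducible f) := ⟨hfirr⟩
  set K := AdjoinRoot f with hK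
  have pb := AdjoinRoot.powerBasis hf0
  haveI : Fintype K := Module.fintypeOfFintype pb.basis
  have hcard : Fintype.card K = 2 ^ f.natDegree := by
    rw [Module.card_eq_pow_finrank (K := ZMod 2) (V := K), ZMod.card]
    congr 1
    rw [(AdjoinRoot.powerBasis hf0).finrank, AdjoinRoot.powerBasis_dim]
  haveI : CharP K 2 := charP_of_injective_algebraMap (algebraMap (ZMod 2) K).injective 2
  haveI : NeZero (n : K) := ⟨by
    rw [Ne, CharP.cast_eq_zero_iff K 2 n]
    exact Nat.two_dvd_ne_zero.mpr (Nat.odd_iff.mp hodd)⟩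
  -- the root is a primitive n-th root of unity
  set ζ : K := AdjoinRoot.root f with hζ
  have hroot : (cyclotomic n K).IsRoot ζ := by
    have h1 : (map (AdjoinRoot.of f) f).IsRoot ζ := AdjoinRoot.isRoot_root f
    have h2 : map (AdjoinRoot.of f) f ∣ cyclotomic n K := by
      rw [← map_cyclotomic n (AdjoinRoot.of f)]
      exact Polynomial.map_dvd _ hfdvd
    exact h1.dvd h2
  have hprim : IsPrimitiveRoot ζ n := Polynomial.isRoot_cyclotomic_iff.mp hroot
  have hζn : ζ ^ n = 1 := hprim.pow_eq_one
  have hζ0 : ζ ≠ 0 := by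
    intro h
    rw [h, zero_pow (by omega)] at hζn
    exact one_ne_zero hζn.symm
  -- Frobenius
  have hfrob : ζ ^ (2 ^ f.natDegree) = ζ := by
    rw [← hcard]; exact FiniteField.pow_card ζ
  have hdpos : 0 < f.natDegree := hfirr.natDegree_pos
  have h2d : 1 ≤ 2 ^ f.natDegree := Nat.one_le_two_pow
  have hζpow : ζ ^ (2 ^ f.natDegree - 1) = 1 := by
    have : ζ ^ (2 ^ f.natDegree - 1) * ζ = 1 * ζ := by
      rw [one_mul, ← pow_succ, Nat.sub_add_cancel h2d, hfrob]
    exact mul_right_cancel₀ hζ0 this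
  have hnd : n ∣ 2 ^ f.natDegree - 1 := hprim.dvd_of_pow_eq_one _ hζpow
  -- transfer to ZMod n
  have h2n : (2 : ZMod n) ^ f.natDegree = 1 := by
    have : ((2 ^ f.natDegree : ℕ) : ZMod n) = ((1 : ℕ) : ZMod n) := by
      rw [ZMod.natCast_eq_natCast_iff]
      exact (Nat.modEq_iff_dvd' h2d).mpr hnd |>.symm
    simpa using this
  have hdvd : Nat.totient n ∣ f.natDegree := by
    rw [← hord]; exact orderOf_dvd_of_pow_eq_one h2n
  have hle : f.natDegree ≤ Nat.totient n := by
    rw [← hdeg]; exact Polynomial.natDegree_le_of_dvd hfdvd hmono.ne_zero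
  have heq : f.natDegree = Φ.natDegree := by
    rw [hdeg]; exact Nat.le_antisymm hle (Nat.le_of_dvd hdpos hdvd)
  -- conclude f = Φ
  obtain ⟨g, hg⟩ := hfdvd
  have hg0 : g ≠ 0 := by rintro rfl; rw [mul_zero] at hg; exact hmono.ne_zero hg
  have hgd : g.natDegree = 0 := by
    have := Polynomial.natDegree_mul hf0 hg0
    rw [← hg, ← heq] at this
    omega
  have hgm : g.Monic := zmod2_monic hg0
  have hg1 : g = 1 := hgm.natDegree_eq_zero.mp hgd
  rw [hg, hg1, mul_one]
  exact hfirr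

lemma order_two_mod_p (p : ℕ) (hp : p.Prime) (hodd : Odd p)
    (h2 : orderOf (2 : ZMod (p ^ 2)) = p * (p - 1)) :
    orderOf (2 : ZMod p) = p - 1 := by
  haveI : Fact p.Prime := ⟨hp⟩
  have hp2 : 2 < p := lt_of_le_of_ne hp.two_le (by rintro rfl; exact (Nat.not_odd_iff_even.mpr (by decide)) hodd)
  have h20 : (2 : ZMod p) ≠ 0 := by
    have : ((2 : ℕ) : ZMod p) ≠ 0 := by
      rw [Ne, ZMod.natCast_eq_zero_iff]

      exact fun h => absurd (Nat.le_of_dvd (by norm_num) h) (by omega)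
    simpa using this
  set d := orderOf (2 : ZMod p) with hd
  have hdvd1 : d ∣ p - 1 := orderOf_dvd_of_pow_eq_one (ZMod.pow_card_sub_one_eq_one h20)
  have hpow : (2 : ZMod p) ^ d = 1 := pow_orderOf_eq_one _
  -- p ∣ 2^d - 1 in ℤ
  have hz : ((p : ℤ)) ∣ (2 : ℤ) ^ d - 1 := by
    have : (((2 : ℤ) ^ d - 1 : ℤ) : ZMod p) = 0 := by
      push_cast
      rw [hpow, sub_self]
    exact (ZMod.intCast_zmod_eq_zero_iff_dvd _ _).mp this
  have hz2 : ((p : ℤ)) ^ 2 ∣ (2 : ℤ) ^ (d * p) - 1 := by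
    have := dvd_sub_pow_of_dvd_sub (p := p) (a := (2:ℤ)^d) (b := 1) hz 1
    simpa [pow_one, ← pow_mul, one_pow] using this
  have hzm : (2 : ZMod (p ^ 2)) ^ (d * p) = 1 := by
    have h0 : (((2 : ℤ) ^ (d * p) - 1 : ℤ) : ZMod (p ^ 2)) = 0 := by
      rw [ZMod.intCast_zmod_eq_zero_iff_dvd]
      push_cast
      exact hz2
    push_cast at h0
    rw [sub_eq_zero] at h0
    exact_mod_cast h0
  have hdvd2 : p * (p - 1) ∣ d * p := h2 ▸ orderOf_dvd_of_pow_eq_one hzm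
  have hdvd3 : (p - 1) ∣ d := by
    rcases hdvd2 with ⟨c, hc⟩
    refine ⟨c, ?_⟩
    have hppos : 0 < p := hp.pos
    have : d * p = (p - 1) * c * p := by rw [hc]; ring
    exact Nat.eq_of_mul_eq_mul_right hppos this
  exact Nat.dvd_antisymm hdvd1 hdvd3

/-- Generating polynomial over `F₂` of one period of the sequence `(h_u)`:
`h_u = 1` iff `gcd(u,p)=1` and `q_{p,w}(u) ∈ 𝓘`. -/
noncomputable def genPoly2 (p w : ℕ) (I : Finset ℕ) : Polynomial (ZMod 2) :=
  ∑ u ∈ Finset.range (p ^ 2),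
    if Nat.gcd u p = 1 ∧ polyQuot p w u ∈ I then Polynomial.X ^ u else 0

lemma genPoly2_coeff (p w : ℕ) (I : Finset ℕ) (u : ℕ) (hu : u < p ^ 2) :
    (genPoly2 p w I).coeff u = if Nat.gcd u p = 1 ∧ polyQuot p w u ∈ I then 1 else 0 := by
  unfold genPoly2
  rw [Polynomial.finset_sum_coeff, Finset.sum_eq_single u]
  · split <;> simp [Polynomial.coeff_X_pow]
  · intro v hv hvu
    split <;> simp [Polynomial.coeff_X_pow, Ne.symm hvu]
  · intro h
    exact absurd (mem_range.mpr hu) h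

lemma key_congruence (p w : ℕ) (I : Finset ℕ) (hp : p.Prime) (hodd : Odd p)
    (hw2 : 2 ≤ w) (hwp : w ≤ p - 1) (hI : I ⊆ Finset.range p) :
    (X ^ p - 1 : Polynomial (ZMod 2)) ∣
      genPoly2 p w I - Polynomial.C ((I.card : ZMod 2)) * (cyclotomic p (ZMod 2) - 1) := by
  haveI : Fact p.Prime := ⟨hp⟩
  have hp3 : 3 ≤ p := by
    rcases hp.two_le.lt_or_eq with h | h
    · omega
    · exfalso; rw [← h] at hodd; exact (by decide : ¬ Odd 2) hodd
  set c : ZMod 2 := (I.card : ZMod 2) with hc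
  -- rewrite the cyclotomic side
  have hΦ : cyclotomic p (ZMod 2) = ∑ j ∈ range p, X ^ j := cyclotomic_prime (ZMod 2) p
  have hT : Polynomial.C c * (cyclotomic p (ZMod 2) - 1) =
      ∑ j ∈ range p, (if Nat.gcd j p = 1 then Polynomial.C c * X ^ j else 0) := by
    have hterm : ∀ j ∈ range p,
        (if Nat.gcd j p = 1 then Polynomial.C c * X ^ j else 0) =
          Polynomial.C c * X ^ j - (if j = 0 then Polynomial.C c * X ^ j else 0) := by
      intro j hj
      rcases eq_or_ne j 0 with rfl | hj0
      · rw [if_neg, if_pos rfl, sub_self]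
        simp only [Nat.gcd_zero_left]
        omega
      · rw [if_pos, if_neg hj0, sub_zero]
        have hnd : ¬ p ∣ j := by
          intro hd
          have := Nat.le_of_dvd (by omega) hd
          have := mem_range.mp hj
          omega
        have := (Nat.Prime.coprime_iff_not_dvd hp).mpr hnd
        rw [Nat.gcd_comm]
        exact this
    rw [Finset.sum_congr rfl hterm, Finset.sum_sub_distrib, Finset.sum_ite_eq' (range p) 0,
      if_pos (mem_range.mpr (by omega)), hΦ, pow_zero, mul_one, mul_sub, mul_one,
      Finset.mul_sum]
  rw [hT]
  -- rewrite the genPoly2 side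
  have hS : genPoly2 p w I = ∑ j ∈ range p, ∑ k ∈ range p,
      (if Nat.gcd j p = 1 ∧ polyQuot p w (k * p + j) ∈ I then X ^ (k * p + j) else 0) := by
    unfold genPoly2
    rw [show p ^ 2 = p * p by ring, sum_range_mul_decomp _ p p hp.pos]
    rw [Finset.sum_comm]
    refine Finset.sum_congr rfl fun j _ => Finset.sum_congr rfl fun k _ => ?_
    simp only [gcd_step]
  rw [hS, ← Finset.sum_sub_distrib]
  apply Finset.dvd_sum
  intro j hj
  rcases eq_or_ne (Nat.gcd j p) 1 with hgcd | hgcd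
  · rw [if_pos hgcd]
    simp only [hgcd, true_and]
    -- key counting step
    have hcount : ∑ k ∈ range p, (if polyQuot p w (k * p + j) ∈ I then (X : Polynomial (ZMod 2)) ^ j else 0)
        = Polynomial.C c * X ^ j := by
      rw [← Finset.sum_filter, Finset.sum_const,
        polyQuot_count p w j hp hw2 hwp hgcd I hI, nsmul_eq_mul]
      rw [Polynomial.C_eq_natCast]
    have hdvd : ∀ k ∈ range p, (X ^ p - 1 : Polynomial (ZMod 2)) ∣
        ((if polyQuot p w (k * p + j) ∈ I then X ^ (k * p + j) else 0) -
         (if polyQuot p w (k * p + j) ∈ I then X ^ j else 0)) := by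
      intro k _
      split
      · have h1 : (X ^ p - 1 : Polynomial (ZMod 2)) ∣ (X ^ p) ^ k - 1 := by
          have := sub_dvd_pow_sub_pow ((X : Polynomial (ZMod 2)) ^ p) 1 k
          rwa [one_pow] at this
        have h2 : (X : Polynomial (ZMod 2)) ^ (k * p + j) - X ^ j = ((X ^ p) ^ k - 1) * X ^ j := by
          rw [sub_mul, one_mul, ← pow_mul, ← pow_add, mul_comm p k]
        rw [h2]
        exact h1.mul_right _
      · rw [sub_self]
        exact dvd_zero _
    have hsum := Finset.dvd_sum hdvd
    rw [Finset.sum_sub_distrib, hcount] at hsum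
    exact hsum
  · rw [if_neg hgcd]
    have : ∀ k ∈ range p, (if Nat.gcd j p = 1 ∧ polyQuot p w (k * p + j) ∈ I
        then (X : Polynomial (ZMod 2)) ^ (k * p + j) else 0) = 0 := by
      intro k _
      rw [if_neg]
      tauto
    rw [Finset.sum_congr rfl this, Finset.sum_const_zero, sub_zero]
    exact dvd_zero _

lemma cycl_pp_not_dvd (p w : ℕ) (I : Finset ℕ) (hp : p.Prime) (hodd : Odd p)
    (hw2 : 2 ≤ w) (hwp : w ≤ p - 1) (hI : I ⊆ Finset.range p) (hIne : I.Nonempty)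
    (hIcard : I.card ≤ (p - 1) / 2) :
    ¬ (cyclotomic (p ^ 2) (ZMod 2) ∣ genPoly2 p w I) := by
  haveI : Fact p.Prime := ⟨hp⟩
  have hp3 : 3 ≤ p := by
    rcases hp.two_le.lt_or_eq with h | h
    · omega
    · exfalso; rw [← h] at hodd; exact (by decide : ¬ Odd 2) hodd
  intro hdvd
  obtain ⟨B, hB⟩ := hdvd
  set S := genPoly2 p w I with hS
  -- pick indices
  obtain ⟨l, hl⟩ := hIne
  have hlp : l < p := mem_range.mp (hI hl)
  have h1p : Nat.gcd 1 p = 1 := Nat.gcd_one_left p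
  obtain ⟨k₁, hk₁, hq₁⟩ := polyQuot_exists p w 1 hp hw2 hwp h1p l hlp
  obtain ⟨l', hl'mem, hl'notin⟩ : ∃ l' ∈ range p, l' ∉ I := by
    rw [← Finset.not_subset]
    intro hsub
    have := Finset.card_le_card hsub
    rw [Finset.card_range] at this
    omega
  obtain ⟨k₂, hk₂, hq₂⟩ := polyQuot_exists p w 1 hp hw2 hwp h1p l' (mem_range.mp hl'mem)
  have hidx : ∀ k, k < p → k * p + 1 < p ^ 2 := by
    intro k hk
    have h2 : k * p + p ≤ p * p := by
      have := Nat.mul_le_mul_right p (show k + 1 ≤ p by omega)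
      rw [Nat.add_mul, one_mul] at this
      exact this
    rw [pow_two]
    omega
  have hc1 : S.coeff (k₁ * p + 1) = 1 := by
    rw [hS, genPoly2_coeff p w I _ (hidx k₁ hk₁), if_pos]
    rw [gcd_step, hq₁]
    exact ⟨h1p, hl⟩
  have hc2 : S.coeff (k₂ * p + 1) = 0 := by
    rw [hS, genPoly2_coeff p w I _ (hidx k₂ hk₂), if_neg]
    rw [gcd_step, hq₂]
    tauto
  have hS0 : S ≠ 0 := by
    intro h
    rw [h, Polynomial.coeff_zero] at hc1
    exact one_ne_zero hc1.symm
  have hB0 : B ≠ 0 := by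
    rintro rfl
    rw [mul_zero] at hB
    exact hS0 hB
  -- degrees
  have hΦm : (cyclotomic (p ^ 2) (ZMod 2)).Monic := cyclotomic.monic _ _
  have hΦdeg : (cyclotomic (p ^ 2) (ZMod 2)).natDegree = p * (p - 1) := by
    rw [natDegree_cyclotomic, Nat.totient_prime_pow hp (by omega : 0 < 2)]
    ring_nf
  have hSdeg : S.natDegree ≤ p ^ 2 - 1 := by
    rw [hS]
    unfold genPoly2
    apply Polynomial.natDegree_sum_le_of_forall_le
    intro u hu
    split
    · rw [Polynomial.natDegree_X_pow]
      have := mem_range.mp hu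
      omega
    · simp
  have hBdeg : B.natDegree < p := by
    have hmul := Polynomial.natDegree_mul hΦm.ne_zero hB0
    rw [← hB, hΦdeg] at hmul
    have hpp : p * (p - 1) + p = p * p := by
      have h : p - 1 + 1 = p := by omega
      calc p * (p - 1) + p = p * ((p - 1) + 1) := by ring
      _ = p * p := by rw [h]
    rw [pow_two] at hSdeg
    omega
  -- coefficient identity
  have hgeom : cyclotomic (p ^ 2) (ZMod 2) = ∑ i ∈ range p, ((X : Polynomial (ZMod 2)) ^ p) ^ i := by
    have := Polynomial.cyclotomic_prime_pow_eq_geom_sum (R := ZMod 2) (p := p) (n := 1) hp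
    simpa [pow_one] using this
  have hcoeff : ∀ k, k ∈ range p → S.coeff (k * p + 1) = B.coeff 1 := by
    intro k hk
    rw [hB, hgeom, Finset.sum_mul, Polynomial.finset_sum_coeff]
    rw [Finset.sum_eq_single k]
    · rw [← pow_mul, mul_comm ((X : Polynomial (ZMod 2)) ^ (p * k)) B,
        Polynomial.coeff_mul_X_pow', if_pos (by rw [mul_comm p k]; omega : p * k ≤ k * p + 1)]
      congr 1
      rw [mul_comm p k]
      omega
    · intro i hi hik
      rw [← pow_mul, mul_comm ((X : Polynomial (ZMod 2)) ^ (p * i)) B,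
        Polynomial.coeff_mul_X_pow']
      split
      · next hle =>
        have hip : i ∈ range p := hi
        have hile : i < k := by
          rcases Nat.lt_or_ge i k with h | h
          · exact h
          · exfalso
            have h4 : p * (k + 1) ≤ p * i := Nat.mul_le_mul_left p (by omega)
            have h5 : p * (k + 1) ≤ k * p + 1 := le_trans h4 hle
            have e : p * (k + 1) = k * p + p := by ring
            omega
        apply Polynomial.coeff_eq_zero_of_natDegree_lt
        have hsub : k * p + 1 - p * i = (k - i) * p + 1 := by
          have h7 : i * p + (k - i) * p = k * p := by
            rw [← Nat.add_mul]
            congr 1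
            omega
          rw [mul_comm p i]
          omega
        rw [hsub]
        have h6 : 1 * p ≤ (k - i) * p := Nat.mul_le_mul_right p (by omega)
        rw [one_mul] at h6
        omega
      · rfl
    · intro h
      exact absurd hk h
  have e1 := hcoeff k₁ (mem_range.mpr hk₁)
  have e2 := hcoeff k₂ (mem_range.mpr hk₂)
  rw [hc1] at e1
  rw [hc2] at e2
  exact (by decide : (1 : ZMod 2) ≠ 0) (e1.trans e2.symm)

theorem stmt_16 (p w : ℕ) (I : Finset ℕ) (hp : p.Prime) (hodd : Odd p)
    (h2 : orderOf (2 : ZMod (p ^ 2)) = p * (p - 1))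
    (hw2 : 2 ≤ w) (hwp : w ≤ p - 1)
    (hI : I ⊆ Finset.range p) (hIne : I.Nonempty) (hIcard : I.card ≤ (p - 1) / 2) :
    p ^ 2 - (EuclideanDomain.gcd ((Polynomial.X : Polynomial (ZMod 2)) ^ (p ^ 2) - 1)
        (genPoly2 p w I)).natDegree =
      if Odd I.card then p ^ 2 - 1 else p ^ 2 - p := by
  haveI : Fact p.Prime := ⟨hp⟩
  have hp3 : 3 ≤ p := by
    rcases hp.two_le.lt_or_eq with h | h
    · omega
    · exfalso; rw [← h] at hodd; exact (by decide : ¬ Odd 2) hodd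
  set S := genPoly2 p w I with hSdef
  set Φp := cyclotomic p (ZMod 2) with hΦp
  set Φpp := cyclotomic (p ^ 2) (ZMod 2) with hΦpp
  set A := ((Polynomial.X : Polynomial (ZMod 2)) ^ (p ^ 2) - 1) with hA
  set d := EuclideanDomain.gcd A S with hd
  -- factorizations
  have hfac1 : Φp * (X - 1) = (X ^ p - 1 : Polynomial (ZMod 2)) := by
    rw [hΦp, cyclotomic_prime]
    exact geom_sum_mul X p
  have hfac2 : Φpp * (X ^ p - 1) = A := by
    have hg : Φpp = ∑ i ∈ range p, ((X : Polynomial (ZMod 2)) ^ p) ^ i := by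
      have := Polynomial.cyclotomic_prime_pow_eq_geom_sum (R := ZMod 2) (p := p) (n := 1) hp
      rw [hΦpp]
      simpa [pow_one] using this
    rw [hg, hA, geom_sum_mul, ← pow_mul, ← pow_two]
  -- irreducibility
  have hirrp : Irreducible Φp := by
    rw [hΦp]
    apply cyclotomic_zmod2_irreducible p hp.two_le hodd
    rw [Nat.totient_prime hp]
    exact order_two_mod_p p hp hodd h2
  have hirrpp : Irreducible Φpp := by
    rw [hΦpp]
    apply cyclotomic_zmod2_irreducible (p ^ 2) (by nlinarith) (hodd.pow)
    rw [Nat.totient_prime_pow hp (by omega : 0 < 2), pow_one]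
    exact h2
  -- basic nonzero / degree facts
  have hAm : A.Monic := by
    have : A = X ^ (p ^ 2) - Polynomial.C 1 := by rw [hA, map_one]
    rw [this]
    exact monic_X_pow_sub_C 1 (by positivity)
  have hA0 : A ≠ 0 := hAm.ne_zero
  have hd0 : d ≠ 0 := by
    rw [hd, Ne, EuclideanDomain.gcd_eq_zero_iff]
    tauto
  have hdA : d ∣ A := EuclideanDomain.gcd_dvd_left A S
  have hdS : d ∣ S := EuclideanDomain.gcd_dvd_right A S
  -- coprimality with Φpp
  have hcop_pp : IsCoprime d Φpp := by
    refine ((hirrpp.coprime_iff_not_dvd).mpr ?_).symm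
    intro hcon
    exact cycl_pp_not_dvd p w I hp hodd hw2 hwp hI hIne hIcard (hcon.trans hdS)
  have hd_dvd_Xp : d ∣ (X ^ p - 1 : Polynomial (ZMod 2)) := by
    have h : d ∣ Φpp * (X ^ p - 1) := hfac2 ▸ hdA
    exact hcop_pp.dvd_of_dvd_mul_left h
  have hkey := key_congruence p w I hp hodd hw2 hwp hI
  have hXp0 : (X ^ p - 1 : Polynomial (ZMod 2)) ≠ 0 := by
    have : (X ^ p - 1 : Polynomial (ZMod 2)) = X ^ p - Polynomial.C 1 := by rw [map_one]
    rw [this]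
    exact (monic_X_pow_sub_C 1 (by omega)).ne_zero
  have hX10 : (X - 1 : Polynomial (ZMod 2)) ≠ 0 := by
    have : (X - 1 : Polynomial (ZMod 2)) = X - Polynomial.C 1 := by rw [map_one]
    rw [this]
    exact (monic_X_sub_C 1).ne_zero
  rcases Nat.even_or_odd I.card with hev | hod
  · -- even case
    have hc0 : ((I.card : ZMod 2)) = 0 := by
      obtain ⟨t, ht⟩ := hev
      rw [ht]
      push_cast
      rw [← two_mul, show ((2 : ZMod 2)) = 0 by decide, zero_mul]
    have hXpS : (X ^ p - 1 : Polynomial (ZMod 2)) ∣ S := by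
      have := hkey
      rw [hc0, map_zero, zero_mul, sub_zero] at this
      exact this
    have hXpd : (X ^ p - 1 : Polynomial (ZMod 2)) ∣ d :=
      EuclideanDomain.dvd_gcd (Dvd.intro_left Φpp hfac2) hXpS
    have hdeg : d.natDegree = p := by
      have h1 : d.natDegree ≤ (X ^ p - 1 : Polynomial (ZMod 2)).natDegree :=
        Polynomial.natDegree_le_of_dvd hd_dvd_Xp hXp0
    -- natDegree (X^p - 1) = p
      have h2 : (X ^ p - 1 : Polynomial (ZMod 2)).natDegree = p := by
        rw [show (X ^ p - 1 : Polynomial (ZMod 2)) = X ^ p - Polynomial.C 1 by rw [map_one]]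
        exact natDegree_X_pow_sub_C
      have h3 : (X ^ p - 1 : Polynomial (ZMod 2)).natDegree ≤ d.natDegree :=
        Polynomial.natDegree_le_of_dvd hXpd hd0
      omega
    rw [hdeg, if_neg (Nat.not_odd_iff_even.mpr hev)]
  · -- odd case
    have hc1 : ((I.card : ZMod 2)) = 1 := by
      obtain ⟨t, ht⟩ := hod
      rw [ht]
      push_cast
      rw [show ((2 : ZMod 2)) = 0 by decide, zero_mul, zero_add]
    rw [hc1, map_one, one_mul] at hkey
    -- X - 1 divides S
    have hX1_dvd_Φm1 : (X - 1 : Polynomial (ZMod 2)) ∣ (Φp - 1) := by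
      rw [show (X - 1 : Polynomial (ZMod 2)) = X - Polynomial.C 1 by rw [map_one]]
      rw [Polynomial.dvd_iff_isRoot]
      unfold Polynomial.IsRoot
      rw [Polynomial.eval_sub, Polynomial.eval_one, hΦp, cyclotomic_prime]
      rw [Polynomial.eval_finset_sum]
      simp only [Polynomial.eval_pow, Polynomial.eval_X, one_pow]
      rw [Finset.sum_const, Finset.card_range, nsmul_eq_mul, mul_one]
      obtain ⟨t, ht⟩ := hodd
      rw [ht]
      push_cast
      rw [show ((2 : ZMod 2)) = 0 by decide]
      ring
    have hX1_dvd_Xp : (X - 1 : Polynomial (ZMod 2)) ∣ (X ^ p - 1) := Dvd.intro_left Φp hfac1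
    have hX1S : (X - 1 : Polynomial (ZMod 2)) ∣ S := by
      have h1 : (X - 1 : Polynomial (ZMod 2)) ∣ S - (Φp - 1) := hX1_dvd_Xp.trans hkey
      have := dvd_add h1 hX1_dvd_Φm1
      rwa [sub_add_cancel] at this
    -- Φp does not divide S
    have hΦp_dvd_Xp : Φp ∣ (X ^ p - 1 : Polynomial (ZMod 2)) := ⟨X - 1, hfac1.symm⟩
    have hΦpS : ¬ Φp ∣ S := by
      intro hcon
      have h1 : Φp ∣ S - (Φp - 1) := hΦp_dvd_Xp.trans hkey
      have h2 : Φp ∣ S - (S - (Φp - 1)) := dvd_sub hcon h1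
      rw [sub_sub_cancel] at h2
      have h3 : Φp ∣ Φp - (Φp - 1) := dvd_sub dvd_rfl h2
      rw [sub_sub_cancel] at h3
      exact hirrp.not_isUnit (isUnit_of_dvd_one h3)
    have hcop_p : IsCoprime d Φp := by
      refine ((hirrp.coprime_iff_not_dvd).mpr ?_).symm
      intro hcon
      exact hΦpS (hcon.trans hdS)
    have hd_X1 : d ∣ (X - 1 : Polynomial (ZMod 2)) := by
      have h : d ∣ Φp * (X - 1) := hfac1.symm ▸ hd_dvd_Xp
      exact hcop_p.dvd_of_dvd_mul_left h
    have hX1d : (X - 1 : Polynomial (ZMod 2)) ∣ d := by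
      apply EuclideanDomain.dvd_gcd
      · exact hX1_dvd_Xp.trans (Dvd.intro_left Φpp hfac2)
      · exact hX1S
    have hdeg : d.natDegree = 1 := by
      have h2 : (X - 1 : Polynomial (ZMod 2)).natDegree = 1 := by
        rw [show (X - 1 : Polynomial (ZMod 2)) = X - Polynomial.C 1 by rw [map_one]]
        exact natDegree_X_sub_C 1
      have h1 : d.natDegree ≤ (X - 1 : Polynomial (ZMod 2)).natDegree :=
        Polynomial.natDegree_le_of_dvd hd_X1 hX10
      have h3 : (X - 1 : Polynomial (ZMod 2)).natDegree ≤ d.natDegree :=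
        Polynomial.natDegree_le_of_dvd hX1d hd0
      omega
    rw [hdeg, if_pos hod]
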